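/- arXiv:2512.21800 — 2 statements merged into one kernel-verified Lean document; each statement's English description precedes it below -/
import Mathlib

section
/- For all integers d ≥ 0, n ≥ 2(d+1) and ω ≥ 1, it holds that g_{n,d}(ω) ≤ C(ω−1+2d, 2d) + C(n−2, 2d+1), and the inequality is strict if and only if (d = 0, ω = 1 and n > 2) or (d > 0 and n > ω+2d+1). Here C(a,b) denotes the binomial coefficient. -/
/-!
Induction on `d`. For `ω > 1` unfold `g_{n,d+1}(ω)` into `∑_{k ≤ ω} (ω-k+1) g_{m_k,d}(k)` and bound
each term by the induction hypothesis. By the weighted hockey-stick identity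
`∑_{j<m} (m-j) C(j,r) = C(m+1,r+2)`, the first binomials sum to exactly `C(ω-1+2d+2, 2d+2)`, and the
second ones to `C(n-2, 2d+3)` minus a tail of binomials `C(j, 2d+1)` with `j < n-3-ω`, which vanishes
iff `n ≤ ω+2d+4`. When `n ≥ ω+2d+4` the term `k = 1` is already strict by induction; otherwise every
term is an equality.
-/

/-- The bounding function `g_{n,d}` (defined here for all `ω`, with value `1`
for `ω ≤ 1`): `g_{n,d}(1) = 1`, `g_{n,0}(ω) = n − 1` for `ω > 1`, and
`g_{n,d}(ω) = ∑_{k=1}^{ω} (ω−k+1) · g_{max(n+k−ω−2, 2d), d−1}(k)` for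
`ω > 1`, `d > 0`. -/
def g : ℕ → ℕ → ℕ → ℕ
  | n, 0, ω => if ω ≤ 1 then 1 else n - 1
  | n, d + 1, ω =>
    if ω ≤ 1 then 1
    else ∑ k ∈ Finset.Icc 1 ω, (ω - k + 1) * g (max (n + k - ω - 2) (2 * (d + 1))) d k
termination_by n d ω => d

open Finset Nat

namespace Nat

theorem sum_range_choose_left (m r : ℕ) : ∑ j ∈ range m, j.choose r = m.choose (r + 1) := by
  induction m with
  | zero => simp
  | succ m ih => rw [sum_range_succ, ih, choose_succ_succ', add_comm]

theorem sum_range_sub_mul_choose_left (m r : ℕ) :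
    ∑ j ∈ range m, (m - j) * j.choose r = (m + 1).choose (r + 2) := by
  induction m with
  | zero => rw [sum_range_zero, choose_eq_zero_of_lt (by omega)]
  | succ m ih =>
    have hsplit : ∀ j ∈ range (m + 1),
        (m + 1 - j) * j.choose r = (m - j) * j.choose r + j.choose r := fun j hj => by
      rw [show m + 1 - j = m - j + 1 by grind, add_one_mul]
    rw [sum_congr rfl hsplit, sum_add_distrib, sum_range_succ, ih, sum_range_choose_left,
      Nat.sub_self, zero_mul, add_zero, choose_succ_succ' (m + 1) (r + 1), add_comm]

theorem sum_range_sub_mul_add_choose_add (ω c r : ℕ) :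
    ∑ i ∈ range ω, (ω - i) * (i + c).choose r + ∑ j ∈ range c, (c + ω - j) * j.choose r =
      (c + ω + 1).choose (r + 2) := by
  rw [← sum_range_sub_mul_choose_left, sum_range_add, add_comm]
  congr 1
  refine sum_congr rfl fun i _ => ?_
  rw [add_comm i c, Nat.add_sub_add_left]

theorem sum_range_sub_mul_add_choose (ω r : ℕ) :
    ∑ i ∈ range ω, (ω - i) * (i + r).choose r = (ω + r + 1).choose (r + 2) := by
  have htail : ∑ j ∈ range r, (r + ω - j) * j.choose r = 0 :=
    sum_eq_zero fun j hj => by rw [choose_eq_zero_of_lt (mem_range.mp hj), mul_zero]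
  rw [← add_zero (∑ i ∈ range ω, _), ← htail, sum_range_sub_mul_add_choose_add, add_comm ω]

theorem sum_range_sub_mul_add_sub_choose_add {r : ℕ} (hr : 0 < r) (ω m : ℕ) :
    ∑ i ∈ range ω, (ω - i) * (i + m - ω).choose r + ∑ j ∈ range (m - ω), (m - j) * j.choose r =
      (m + 1).choose (r + 2) := by
  rcases le_total ω m with hωm | hmω
  · obtain ⟨c, rfl⟩ := Nat.exists_eq_add_of_le' hωm
    simp only [← Nat.add_assoc, Nat.add_sub_cancel]
    exact sum_range_sub_mul_add_choose_add ω c r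
  · obtain ⟨c, rfl⟩ := Nat.exists_eq_add_of_le hmω
    have hlow : ∀ i ∈ range c, (c + m - i) * (i + m - (c + m)).choose r = 0 := fun i hi => by
      rw [show i + m - (c + m) = 0 by grind, choose_eq_zero_of_lt hr, mul_zero]
    rw [Nat.sub_eq_zero_of_le (Nat.le_add_right m c), sum_range_zero, add_zero, add_comm m c,
      sum_range_add, sum_eq_zero hlow, zero_add,
      ← sum_range_sub_mul_choose_left]
    refine sum_congr rfl fun i _ => ?_
    rw [show c + m - (c + i) = m - i by omega, show c + i + m - (c + m) = i by omega]

theorem choose_max_add_two_sub_two (x r : ℕ) :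
    (max x (r + 2) - 2).choose (r + 1) = (x - 2).choose (r + 1) := by
  rcases le_total (r + 2) x with h | h
  · rw [max_eq_left h]
  · rw [max_eq_right h, choose_eq_zero_of_lt (by omega), choose_eq_zero_of_lt (by omega)]

end Nat

theorem g_of_le_one (n d : ℕ) {ω : ℕ} (hω : ω ≤ 1) : g n d ω = 1 := by
  cases d <;> rw [g, if_pos hω]

theorem g_zero (n : ℕ) {ω : ℕ} (hω : 1 < ω) : g n 0 ω = n - 1 := by
  rw [g, if_neg hω.not_ge]

theorem g_succ (n d : ℕ) {ω : ℕ} (hω : 1 < ω) :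
    g n (d + 1) ω = ∑ i ∈ range ω, (ω - i) * g (max (n + i - ω - 1) (2 * (d + 1))) d (i + 1) := by
  rw [g, if_neg hω.not_ge, ← Ico_add_one_right_eq_Icc, sum_Ico_eq_sum_range, Nat.add_sub_cancel]
  refine sum_congr rfl fun i hi => ?_
  rw [show ω - (1 + i) + 1 = ω - i by grind, show n + (1 + i) - ω - 2 = n + i - ω - 1 by omega,
    add_comm 1 i]

def gBound (n d ω : ℕ) : ℕ := (ω - 1 + 2 * d).choose (2 * d) + (n - 2).choose (2 * d + 1)

theorem sum_mul_gBound_add (e n ω : ℕ) (hn : 3 ≤ n) (hω : 1 ≤ ω) :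
    ∑ i ∈ range ω, (ω - i) * gBound (max (n + i - ω - 1) (2 * (e + 1))) e (i + 1) +
        ∑ j ∈ range (n - 3 - ω), (n - 3 - j) * j.choose (2 * e + 1) =
      gBound n (e + 1) ω := by
  have hterm : ∀ i, gBound (max (n + i - ω - 1) (2 * (e + 1))) e (i + 1) =
      (i + 2 * e).choose (2 * e) + (i + (n - 3) - ω).choose (2 * e + 1) := fun i => by
    rw [gBound, show 2 * (e + 1) = 2 * e + 2 by ring, choose_max_add_two_sub_two,
      Nat.add_sub_cancel, show n + i - ω - 1 - 2 = i + (n - 3) - ω by omega]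
  simp only [hterm]
  simp only [mul_add, sum_add_distrib]
  rw [add_assoc, sum_range_sub_mul_add_sub_choose_add (Nat.succ_pos (2 * e)),
    sum_range_sub_mul_add_choose, gBound, show ω + 2 * e + 1 = ω - 1 + 2 * (e + 1) by omega,
    show n - 3 + 1 = n - 2 by omega, show 2 * e + 1 + 2 = 2 * (e + 1) + 1 by ring,
    show 2 * e + 2 = 2 * (e + 1) by ring]

def GBoundSharp (n d ω : ℕ) : Prop :=
  g n d ω ≤ gBound n d ω ∧
    (g n d ω < gBound n d ω ↔ (d = 0 ∧ ω = 1 ∧ 2 < n) ∨ (0 < d ∧ ω + 2 * d + 1 < n))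

theorem g_succ_le_gBound_and_lt_iff {e n ω : ℕ}
    (ih : ∀ n ω, 2 * (e + 1) ≤ n → 1 ≤ ω → GBoundSharp n e ω)
    (hn : 2 * (e + 2) ≤ n) (hω : 1 < ω) :
    g n (e + 1) ω ≤ gBound n (e + 1) ω ∧
      (g n (e + 1) ω < gBound n (e + 1) ω ↔ ω + 2 * (e + 1) + 1 < n) := by
  obtain ⟨m, hm⟩ : ∃ m : ℕ → ℕ, ∀ i, max (n + i - ω - 1) (2 * (e + 1)) = m i :=
    ⟨_, fun _ => rfl⟩
  have hsum := sum_mul_gBound_add e n ω (by omega) hω.le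
  rw [g_succ n e hω]
  simp only [hm] at hsum ⊢
  have hsharp (i : ℕ) : GBoundSharp (m i) e (i + 1) :=
    ih _ _ (hm i ▸ le_max_right _ _) (Nat.le_add_left 1 i)
  by_cases hc : ω + 2 * (e + 1) + 1 < n
  · -- the summand `i = 0` alone is already strictly below its bound
    have hlt : ∑ i ∈ range ω, (ω - i) * g (m i) e (i + 1) <
        ∑ i ∈ range ω, (ω - i) * gBound (m i) e (i + 1) :=
      sum_lt_sum (fun i _ => Nat.mul_le_mul_left _ (hsharp i).1)
        ⟨0, mem_range.mpr (by omega),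
          Nat.mul_lt_mul_of_pos_left ((hsharp 0).2.mpr (by have := hm 0; omega)) (by omega)⟩
    exact ⟨by omega, iff_of_true (by omega) hc⟩
  · have htail : ∑ j ∈ range (n - 3 - ω), (n - 3 - j) * j.choose (2 * e + 1) = 0 :=
      sum_eq_zero fun j hj => by
        rw [choose_eq_zero_of_lt (by rw [mem_range] at hj; omega), mul_zero]
    have heq : ∑ i ∈ range ω, (ω - i) * g (m i) e (i + 1) =
        ∑ i ∈ range ω, (ω - i) * gBound (m i) e (i + 1) :=
      sum_congr rfl fun i _ => by
        have := hm i
        rw [Nat.eq_of_le_of_lt_succ (hsharp i).1 (by have := (hsharp i).2; omega)]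
    exact ⟨by omega, iff_of_false (by omega) hc⟩

theorem gBoundSharp (d : ℕ) : ∀ n ω, 2 * (d + 1) ≤ n → 1 ≤ ω → GBoundSharp n d ω := by
  induction d with
  | zero =>
    intro n ω hn hω
    rcases hω.eq_or_lt with rfl | hω
    · simp [GBoundSharp, g_of_le_one, gBound]
    · rw [GBoundSharp, g_zero n hω, gBound, mul_zero, add_zero, choose_zero_right,
        choose_one_right]
      omega
  | succ e ih =>
    intro n ω hn hω
    rcases hω.eq_or_lt with rfl | hω
    · have := @choose_eq_zero_iff (n - 2) (2 * (e + 1) + 1)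
      rw [GBoundSharp, g_of_le_one n _ le_rfl, gBound, Nat.sub_self, zero_add, choose_self]
      omega
    · simpa [GBoundSharp] using g_succ_le_gBound_and_lt_iff ih hn hω

theorem stmt_16 (d n ω : ℕ) (hn : 2 * (d + 1) ≤ n) (hω : 1 ≤ ω) :
    g n d ω ≤ Nat.choose (ω - 1 + 2 * d) (2 * d) + Nat.choose (n - 2) (2 * d + 1) ∧
    (g n d ω < Nat.choose (ω - 1 + 2 * d) (2 * d) + Nat.choose (n - 2) (2 * d + 1) ↔
      (d = 0 ∧ ω = 1 ∧ 2 < n) ∨ (0 < d ∧ ω + 2 * d + 1 < n)) :=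
  gBoundSharp d n ω hn hω
end

section
/- For all integers d ≥ 0 and n ≥ 2(d+1), every 𝐁_{n,d}-free graph G satisfies χ(G) ≤ C(ω(G)−1+2d, 2d) + C(n−2, 2d+1), where C(a,b) denotes the binomial coefficient. -/
open SimpleGraph

/-- The join `K_m + H` construction: disjoint union with all edges in between. -/
def graphJoin {α β : Type*} (G : SimpleGraph α) (H : SimpleGraph β) :
    SimpleGraph (α ⊕ β) where
  Adj x y :=
    match x, y with
    | Sum.inl a, Sum.inl b => G.Adj a b
    | Sum.inr a, Sum.inr b => H.Adj a b
    | Sum.inl _, Sum.inr _ => True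
    | Sum.inr _, Sum.inl _ => True
  symm := ⟨by rintro (a|a) (b|b) h <;> simp_all [SimpleGraph.adj_comm]⟩
  loopless := ⟨by rintro (a|a) h <;> simp_all⟩

/-- `InB n d V H` says that the graph `H` on vertex type `V` belongs (up to
isomorphism) to the family `𝐁_{n,d}`: `𝐁_{n,0}` consists of the graphs on `n`
vertices having a vertex adjacent to all other vertices, and for `d > 0`,
`𝐁_{n,d} = ⋃_{m=2d}^{n−2} { K_{n−m−2} + (K₂ ∪ H') : H' ∈ 𝐁_{m,d−1} }`. -/
def InB : ℕ → ℕ → (V : Type) → SimpleGraph V → Prop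
  | n, 0, V, H => Nat.card V = n ∧ ∃ v : V, ∀ w : V, w ≠ v → H.Adj v w
  | n, d + 1, _, H => ∃ m : ℕ, 2 * (d + 1) ≤ m ∧ m ≤ n - 2 ∧
      ∃ (W : Type) (H' : SimpleGraph W), InB m d W H' ∧
        Nonempty (H ≃g graphJoin (⊤ : SimpleGraph (Fin (n - m - 2)))
          ((⊤ : SimpleGraph (Fin 2)) ⊕g H'))

/-- A graph `G` is `𝐁_{n,d}`-free if no induced subgraph of `G` is isomorphic to
a member of `𝐁_{n,d}`. -/
def BFree (n d : ℕ) {V : Type} (G : SimpleGraph V) : Prop :=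
  ∀ (W : Type) (H : SimpleGraph W), InB n d W H → IsEmpty (H ↪g G)

/-!
Induction on `d`. A `𝐁_{n,0}`-free graph has maximum degree at most `n - 2`, so it is greedily
`(n - 1)`-colourable. For `d > 0`, fix a maximum clique `v 0, …, v (ω - 1)`. Every vertex misses
some `v k`. The vertices missing only `v i` form an independent set; the vertices whose first two
non-neighbours on the clique are `v i` and `v j` (`i < j`) see the other `j - 1` vertices `v k`,
`k < j`, so they induce a graph of clique number at most `ω - j + 1`. This graph is
`𝐁_{m,d-1}`-free for `m = max (2d) (n - j - 1)`: an induced member of `𝐁_{m,d-1}` in it, joined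
to the edge `v i v j` and to `n - m - 2` of those `v k`, would be an induced member of `𝐁_{n,d}`.
Colouring the classes separately and summing the inductive bounds,
`∑_{j ≤ m} j C(m - j + b, b) = C(m + b + 1, b + 2)` gives the claim.
-/

open Finset

theorem Nat.sum_antidiagonal_mul_choose_add (b m : ℕ) :
    ∑ p ∈ antidiagonal m, p.1 * (b + p.2).choose b = (b + m + 1).choose (b + 2) := by
  induction m with
  | zero => simp
  | succ m ih =>
    rw [Nat.sum_antidiagonal_succ]
    simp only [zero_mul, zero_add, add_mul, one_mul, sum_add_distrib, ih,
      Finset.sum_antidiagonal_choose_add]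
    rw [← add_assoc, Nat.choose_succ_succ' (b + m + 1) (b + 1), add_comm]

theorem Nat.add_sum_range_mul_choose (b m : ℕ) :
    m + ∑ j ∈ range m, j * (m - j + b).choose b = (m + b + 1).choose (b + 2) := by
  have h := Nat.sum_antidiagonal_mul_choose_add b m
  rw [Nat.sum_antidiagonal_eq_sum_range_succ (fun i k => i * (b + k).choose b),
    sum_range_succ] at h
  simp only [Nat.sub_self, add_zero, Nat.choose_self, mul_one] at h
  simp only [add_comm _ b, ← h, add_comm m]

theorem Nat.sum_range_mul_choose_sub_le (s N b : ℕ) :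
    ∑ j ∈ range s, j * (N - j - 1).choose (b + 1) ≤ N.choose (b + 3) := by
  rcases Nat.lt_or_ge N (b + 2) with hN | hN
  · rw [sum_eq_zero fun j _ => by rw [Nat.choose_eq_zero_of_lt (by omega), mul_zero]]
    exact Nat.zero_le _
  obtain ⟨m, rfl⟩ := Nat.exists_eq_add_of_le hN
  have h := Nat.sum_antidiagonal_mul_choose_add (b + 1) m
  rw [Nat.sum_antidiagonal_eq_sum_range_succ (fun i k => i * (b + 1 + k).choose (b + 1))] at h
  calc ∑ j ∈ range s, j * (b + 2 + m - j - 1).choose (b + 1)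
      ≤ ∑ j ∈ range (m + 1), j * (b + 2 + m - j - 1).choose (b + 1) := by
        refine sum_le_sum_of_ne_zero fun j _ hj => mem_range.2 ?_
        by_contra! hjm
        exact hj (by rw [Nat.choose_eq_zero_of_lt (by omega), mul_zero])
    _ = (b + 2 + m).choose (b + 3) := by
        rw [show b + 2 + m = b + 1 + m + 1 by ring, ← h]
        refine sum_congr rfl fun j hj => ?_
        rw [mem_range] at hj
        congr 2
        omega

theorem Finset.Nonempty.eq_singleton_or_exists_first_two {α : Type*} [LinearOrder α]
    {S : Finset α} (hS : S.Nonempty) :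
    (∃ i, S = {i}) ∨ ∃ i j, i < j ∧ i ∈ S ∧ j ∈ S ∧ ∀ k < j, k ≠ i → k ∉ S := by
  obtain hsingle | hnt := hS.exists_eq_singleton_or_nontrivial
  · exact Or.inl hsingle
  have hne : (S.erase (S.min' hS)).Nonempty := hnt.erase_nonempty
  have hj := mem_erase.1 (min'_mem _ hne)
  refine Or.inr ⟨S.min' hS, _, lt_of_le_of_ne (min'_le _ _ hj.2) (Ne.symm hj.1), min'_mem _ _,
    hj.2, fun k hkj hki hk => ?_⟩
  exact (min'_le _ k (mem_erase.2 ⟨hki, hk⟩)).not_gt hkj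

theorem Fin.sum_prod_ite_lt {M : Type*} [AddCommMonoid M] (ω : ℕ) (f : ℕ → M) :
    ∑ q : Fin ω × Fin ω, (if q.1 < q.2 then f q.2 else 0) = ∑ j ∈ range ω, j • f j := by
  rw [Fintype.sum_prod_type_right, ← Fin.sum_univ_eq_sum_range (fun j => j • f j)]
  refine sum_congr rfl fun j _ => ?_
  simp only [sum_ite, sum_const_zero, add_zero, filter_gt_eq_Iio]
  rw [Finset.sum_const, Fin.card_Iio]

def chromaticBound (d n ω : ℕ) : ℕ :=
  (ω - 1 + 2 * d).choose (2 * d) + (n - 2).choose (2 * d + 1)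

theorem chromaticBound_mono {d n n' ω ω' : ℕ} (hn : n ≤ n') (hω : ω ≤ ω') :
    chromaticBound d n ω ≤ chromaticBound d n' ω' :=
  add_le_add (Nat.choose_le_choose _ (by omega)) (Nat.choose_le_choose _ (by omega))

theorem chromaticBound_max (d n ω : ℕ) :
    chromaticBound d (max (2 * (d + 1)) n) ω = chromaticBound d n ω := by
  rcases le_total n (2 * (d + 1)) with h | h
  · simp only [chromaticBound, max_eq_left h]
    rw [Nat.choose_eq_zero_of_lt (n := 2 * (d + 1) - 2) (by omega),
      Nat.choose_eq_zero_of_lt (n := n - 2) (by omega)]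
  · rw [max_eq_right h]

theorem add_sum_range_mul_chromaticBound_le (e n ω : ℕ) :
    ω + ∑ j ∈ range ω, j * chromaticBound e (n - j - 1) (ω - j + 1) ≤
      chromaticBound (e + 1) n ω := by
  rcases ω with _ | t
  · exact Nat.zero_le _
  calc _ = (t + 1 + ∑ j ∈ range (t + 1), j * (t + 1 - j + 2 * e).choose (2 * e)) +
        ∑ j ∈ range (t + 1), j * (n - 2 - j - 1).choose (2 * e + 1) := by
        have hsub (j : ℕ) : n - j - 1 - 2 = n - 2 - j - 1 := by omega
        simp only [chromaticBound, Nat.add_sub_cancel, hsub, mul_add, sum_add_distrib,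
          add_assoc]
    _ ≤ (t + 1 + 2 * e + 1).choose (2 * e + 2) + (n - 2).choose (2 * e + 3) := by
        rw [Nat.add_sum_range_mul_choose]
        gcongr
        exact Nat.sum_range_mul_choose_sub_le _ _ _
    _ = chromaticBound (e + 1) n (t + 1) := by
        simp only [chromaticBound, Nat.add_sub_cancel]
        congr 2; ring

namespace SimpleGraph

variable {V : Type*} {G : SimpleGraph V}

theorem colorable_succ_of_forall_degree_le [Fintype V] [DecidableRel G.Adj] {k : ℕ}
    (h : ∀ v, G.degree v ≤ k) : G.Colorable (k + 1) := by
  classical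
  suffices ∀ s : Finset V, ∃ c : V → Fin (k + 1), ∀ u ∈ s, ∀ v ∈ s, G.Adj u v → c u ≠ c v by
    obtain ⟨c, hc⟩ := this univ
    exact ⟨Coloring.mk c fun huv => hc _ (mem_univ _) _ (mem_univ _) huv⟩
  intro s
  induction s using Finset.induction_on with
  | empty => exact ⟨fun _ => 0, by simp⟩
  | insert a s ha ih =>
    obtain ⟨c, hc⟩ := ih
    obtain ⟨x, -, hx⟩ : ∃ x ∈ (univ : Finset (Fin (k + 1))), x ∉ (G.neighborFinset a).image c :=
      exists_mem_notMem_of_card_lt_card <| card_image_le.trans_lt <| by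
        simpa [Nat.lt_succ_iff] using h a
    refine ⟨Function.update c a x, ?_⟩
    have hfresh : ∀ v, G.Adj a v → x ≠ c v := fun v hv hxv =>
      hx (mem_image.2 ⟨v, (mem_neighborFinset _ _ _).2 hv, hxv.symm⟩)
    intro u hu v hv huv
    rcases mem_insert.1 hu with rfl | hu <;> rcases mem_insert.1 hv with rfl | hv
    · exact absurd rfl huv.ne
    · simpa [Function.update, huv.ne'] using hfresh v huv
    · simpa [Function.update, huv.ne] using (hfresh u huv.symm).symm
    · simpa [Function.update, (ne_of_mem_of_not_mem hu ha), (ne_of_mem_of_not_mem hv ha)]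
        using hc u hu v hv huv

theorem colorable_sum_of_cover {ι : Type*} [Fintype ι] (A : ι → Set V)
    (hA : ∀ v, ∃ i, v ∈ A i) (k : ι → ℕ) (h : ∀ i, (G.induce (A i)).Colorable (k i)) :
    G.Colorable (∑ i, k i) := by
  choose p hp using hA
  let C i := (h i).some
  have hC : ∀ {a b}, G.Adj a b → ∀ i j (ha : a ∈ A i) (hb : b ∈ A j),
      (⟨i, C i ⟨a, ha⟩⟩ : Σ i, Fin (k i)) ≠ ⟨j, C j ⟨b, hb⟩⟩ := by
    intro a b hab i j ha hb hij
    obtain ⟨rfl, hij⟩ := Sigma.mk.inj_iff.1 hij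
    exact (C i).valid (show (G.induce (A i)).Adj ⟨a, ha⟩ ⟨b, hb⟩ from hab) (eq_of_heq hij)
  simpa using (Coloring.mk (fun v => (⟨p v, C (p v) ⟨v, hp v⟩⟩ : Σ i, Fin (k i)))
    fun hab => hC hab _ _ _ _).colorable

theorem IsIndepSet.colorable_induce {s : Set V} (hs : G.IsIndepSet s) :
    (G.induce s).Colorable 1 :=
  ⟨Coloring.mk (fun _ => 0) fun {a b} hab =>
    absurd hab (hs a.2 b.2 (Subtype.coe_ne_coe.2 hab.ne))⟩

theorem card_add_card_le_cliqueNum [Finite V] {S T : Finset V}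
    (hS : G.IsClique (S : Set V)) (hT : G.IsClique (T : Set V))
    (hST : ∀ s ∈ S, ∀ t ∈ T, G.Adj s t) : #S + #T ≤ G.cliqueNum := by
  classical
  have hdisj : Disjoint S T := Finset.disjoint_left.2 fun _ hs ht => (hST _ hs _ ht).ne rfl
  rw [← card_union_of_disjoint hdisj]
  refine IsClique.card_le_cliqueNum (tc := ?_)
  rw [coe_union, isClique_iff, Set.pairwise_union]
  exact ⟨hS, hT, fun s hs t ht _ => ⟨hST s hs t ht, (hST s hs t ht).symm⟩⟩

section MaximumClique

variable {ω : ℕ}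

theorem isClique_map_topEmbedding (v : completeGraph (Fin ω) ↪g G) (D : Finset (Fin ω)) :
    G.IsClique (D.map v.toEmbedding : Set V) := by
  rintro _ hx _ hy hxy
  obtain ⟨k, -, rfl⟩ := mem_map.1 hx
  obtain ⟨l, -, rfl⟩ := mem_map.1 hy
  exact v.map_adj_iff.2 fun hkl => hxy (congrArg v hkl)

theorem exists_not_adj_of_cliqueNum_le [Finite V] (v : completeGraph (Fin ω) ↪g G)
    (hω : G.cliqueNum ≤ ω) (x : V) : ∃ i, ¬G.Adj x (v i) := by
  by_contra! h
  have := card_add_card_le_cliqueNum (S := {x}) (by simp) (isClique_map_topEmbedding v univ)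
    (by simpa using h)
  simp only [card_singleton, card_map, card_univ, Fintype.card_fin] at this
  omega

def missesOnly (G : SimpleGraph V) (v : Fin ω → V) (i : Fin ω) : Set V :=
  {x | ∀ k, k ≠ i → G.Adj x (v k)}

def firstMisses (G : SimpleGraph V) (v : Fin ω → V) (i j : Fin ω) : Set V :=
  {x | i < j ∧ ¬G.Adj x (v i) ∧ ¬G.Adj x (v j) ∧ ∀ k < j, k ≠ i → G.Adj x (v k)}

theorem exists_mem_missesOnly_or_firstMisses [Finite V] (v : completeGraph (Fin ω) ↪g G)
    (hω : G.cliqueNum ≤ ω) (x : V) :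
    (∃ i, x ∈ G.missesOnly v i) ∨ ∃ i j, x ∈ G.firstMisses v i j := by
  classical
  set S := univ.filter fun k => ¬G.Adj x (v k)
  have hS : S.Nonempty := by
    simpa [S, Finset.Nonempty] using exists_not_adj_of_cliqueNum_le v hω x
  rcases hS.eq_singleton_or_exists_first_two with ⟨i, hi⟩ | ⟨i, j, hij, hi, hj, hfirst⟩
  · refine Or.inl ⟨i, fun k hk => ?_⟩
    by_contra hxk
    exact hk (mem_singleton.1 (hi ▸ mem_filter.2 ⟨mem_univ k, hxk⟩))
  · refine Or.inr ⟨i, j, hij, (mem_filter.1 hi).2, (mem_filter.1 hj).2, fun k hkj hki => ?_⟩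
    by_contra hxk
    exact hfirst k hkj hki (mem_filter.2 ⟨mem_univ k, hxk⟩)

theorem isIndepSet_missesOnly [Finite V] (v : completeGraph (Fin ω) ↪g G)
    (hω : G.cliqueNum ≤ ω) (i : Fin ω) : G.IsIndepSet (G.missesOnly v i) := by
  classical
  intro x hx y hy hxy hadj
  have := card_add_card_le_cliqueNum (S := {x, y}) (by simpa [coe_pair] using fun _ => hadj)
    (isClique_map_topEmbedding v (univ.erase i)) (by
      intro s hs t ht
      obtain ⟨k, hk, rfl⟩ := mem_map.1 ht
      have hki := (mem_erase.1 hk).1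
      rcases mem_insert.1 hs with rfl | hs
      · exact hx k hki
      · rw [mem_singleton.1 hs]
        exact hy k hki)
  rw [card_pair hxy, card_map, card_erase_of_mem (mem_univ i), card_univ, Fintype.card_fin] at this
  have := i.pos
  omega

end MaximumClique

section Embedding

variable {α β : Type*} {G₁ : SimpleGraph α} {G₂ : SimpleGraph β}

def Embedding.graphJoinElim (f : G₁ ↪g G) (g : G₂ ↪g G) (h : ∀ a b, G.Adj (f a) (g b)) :
    graphJoin G₁ G₂ ↪g G where
  toFun := Sum.elim f g
  inj' := by
    rintro (a | b) (a' | b') hab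
    · exact congrArg Sum.inl (f.injective hab)
    · exact absurd hab (h a b').ne
    · exact absurd hab.symm (h a' b).ne
    · exact congrArg Sum.inr (g.injective hab)
  map_rel_iff' := by
    rintro (a | b) (a' | b')
    · exact f.map_adj_iff
    · exact iff_of_true (h a b') trivial
    · exact iff_of_true (h a' b).symm trivial
    · exact g.map_adj_iff

def Embedding.sumElim (f : G₁ ↪g G) (g : G₂ ↪g G)
    (h : ∀ a b, f a ≠ g b ∧ ¬G.Adj (f a) (g b)) : G₁ ⊕g G₂ ↪g G where
  toFun := Sum.elim f g
  inj' := by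
    rintro (a | b) (a' | b') hab
    · exact congrArg Sum.inl (f.injective hab)
    · exact absurd hab (h a b').1
    · exact absurd hab.symm (h a' b).1
    · exact congrArg Sum.inr (g.injective hab)
  map_rel_iff' := by
    rintro (a | b) (a' | b')
    · exact f.map_adj_iff
    · exact iff_of_false (h a b').2 (by simp)
    · exact iff_of_false (fun hab => (h a' b).2 hab.symm) (by simp)
    · exact g.map_adj_iff

end Embedding

end SimpleGraph

theorem InB.succ_graphJoin {m n e : ℕ} {W : Type} {H : SimpleGraph W} (hH : InB m e W H)
    (hm : 2 * (e + 1) ≤ m) (hmn : m ≤ n - 2) :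
    InB n (e + 1) _ (graphJoin (⊤ : SimpleGraph (Fin (n - m - 2)))
      ((⊤ : SimpleGraph (Fin 2)) ⊕g H)) :=
  ⟨m, hm, hmn, W, H, hH, ⟨Iso.refl⟩⟩

theorem BFree.induce_of_join {n m e : ℕ} {V : Type} {G : SimpleGraph V}
    (hG : BFree n (e + 1) G) (hm : 2 * (e + 1) ≤ m) (hmn : m ≤ n - 2)
    (K : completeGraph (Fin (n - m - 2)) ↪g G) (E : completeGraph (Fin 2) ↪g G) (Y : Set V)
    (hKE : ∀ k z, G.Adj (K k) (E z)) (hKY : ∀ k, ∀ y ∈ Y, G.Adj (K k) y)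
    (hEY : ∀ z, ∀ y ∈ Y, ¬G.Adj (E z) y) :
    BFree m e (G.induce Y) := by
  intro W H hH
  refine ⟨fun f => (hG _ _ (hH.succ_graphJoin hm hmn)).false ?_⟩
  let F := (Embedding.induce Y).comp f
  have hEF : ∀ z w, E z ≠ F w ∧ ¬G.Adj (E z) (F w) := by
    refine fun z w => ⟨fun hzw => ?_, hEY z _ (f w).2⟩
    obtain ⟨z', hz'⟩ := exists_ne z
    exact hEY z' _ (hzw ▸ (f w).2) (E.map_adj_iff.2 hz')
  refine K.graphJoinElim (E.sumElim F hEF) ?_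
  rintro k (z | w)
  exacts [hKE k z, hKY k _ (f w).2]

namespace SimpleGraph

variable {V : Type} {G : SimpleGraph V} {ω : ℕ}

theorem degree_le_of_bFree_zero [Fintype V] [DecidableRel G.Adj] {n : ℕ} (hn : 0 < n)
    (hG : BFree n 0 G) (v : V) : G.degree v ≤ n - 2 := by
  classical
  by_contra! h
  obtain ⟨S, hS, hcard⟩ := exists_subset_card_eq (s := G.neighborFinset v) (n := n - 1)
    (by rw [card_neighborFinset_eq_degree]; omega)
  have hv : v ∉ S := fun hvS => ((mem_neighborFinset _ _ _).1 (hS hvS)).ne rfl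
  refine (hG _ (G.induce ↑(insert v S)) ⟨?_, ⟨v, mem_insert_self v S⟩, ?_⟩).false
    (Embedding.induce _)
  · rw [Nat.card_coe_set_eq, Set.ncard_coe_finset, card_insert_of_notMem hv, hcard]
    omega
  · rintro ⟨w, hw⟩ hwv
    have hwS : w ∈ S := (mem_insert.1 hw).resolve_left fun h => hwv (Subtype.ext h)
    exact (G.mem_neighborFinset v w).1 (hS hwS)

theorem colorable_of_bFree_zero [Finite V] {n : ℕ} (hn : 2 ≤ n) (hG : BFree n 0 G) :
    G.Colorable (chromaticBound 0 n G.cliqueNum) := by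
  have := Fintype.ofFinite V
  classical
  refine (colorable_succ_of_forall_degree_le (degree_le_of_bFree_zero (by omega) hG)).mono ?_
  simp only [chromaticBound, mul_zero, Nat.choose_zero_right, zero_add, Nat.choose_one_right]
  omega

theorem cliqueNum_induce_firstMisses_add_le [Finite V] (v : completeGraph (Fin ω) ↪g G)
    (hω : G.cliqueNum ≤ ω) {i j : Fin ω} (hij : i < j) :
    (G.induce (G.firstMisses v i j)).cliqueNum + (j - 1) ≤ ω := by
  classical
  obtain ⟨T, hT⟩ := (G.induce (G.firstMisses v i j)).exists_isNClique_cliqueNum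
  rw [isNClique_induce_iff] at hT
  have := card_add_card_le_cliqueNum hT.isClique (isClique_map_topEmbedding v ((Iio j).erase i))
    (by
      intro s hs t ht
      obtain ⟨⟨s, hsY⟩, -, rfl⟩ := mem_map.1 hs
      obtain ⟨k, hk, rfl⟩ := mem_map.1 ht
      obtain ⟨hki, hkj⟩ := mem_erase.1 hk
      exact hsY.2.2.2 k (mem_Iio.1 hkj) hki)
  rw [hT.card_eq, card_map, card_erase_of_mem (mem_Iio.2 hij), Fin.card_Iio] at this
  omega

theorem bFree_induce_firstMisses {n m e : ℕ} (hG : BFree n (e + 1) G) (hm : 2 * (e + 1) ≤ m)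
    (hmn : m ≤ n - 2) (v : completeGraph (Fin ω) ↪g G) {i j : Fin ω} (hij : i < j)
    (hc : n - m - 2 ≤ j - 1) : BFree m e (G.induce (G.firstMisses v i j)) := by
  classical
  obtain ⟨t, htD, htc⟩ := exists_subset_card_eq (s := (Iio j).erase i) (n := n - m - 2)
    (by rwa [card_erase_of_mem (mem_Iio.2 hij), Fin.card_Iio])
  let K := t.orderEmbOfFin htc
  have hK (k) : K k < j ∧ K k ≠ i := by
    obtain ⟨hki, hkj⟩ := mem_erase.1 (htD (t.orderEmbOfFin_mem htc k))
    exact ⟨mem_Iio.1 hkj, hki⟩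
  let E : Fin 2 ↪ Fin ω := ⟨![i, j], by
    intro a b
    fin_cases a <;> fin_cases b <;> simp [hij.ne, hij.ne']⟩
  refine hG.induce_of_join hm hmn (v.comp (Embedding.completeGraph K.toEmbedding))
    (v.comp (Embedding.completeGraph E)) _ (fun k z => v.map_adj_iff.2 ?_)
    (fun k y hy => (hy.2.2.2 _ (hK k).1 (hK k).2).symm) (fun z y hy => ?_)
  · fin_cases z
    exacts [(hK k).2, (hK k).1.ne]
  · fin_cases z
    exacts [fun h => hy.2.1 h.symm, fun h => hy.2.2.1 h.symm]

theorem colorable_induce_firstMisses {e n : ℕ} [Finite V]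
    (ih : ∀ m, 2 * (e + 1) ≤ m → ∀ (U : Type) [Finite U] (H : SimpleGraph U),
      BFree m e H → H.Colorable (chromaticBound e m H.cliqueNum))
    (hn : 2 * (e + 2) ≤ n) (hG : BFree n (e + 1) G) (v : completeGraph (Fin ω) ↪g G)
    (hω : G.cliqueNum ≤ ω) {i j : Fin ω} (hij : i < j) :
    (G.induce (G.firstMisses v i j)).Colorable (chromaticBound e (n - j - 1) (ω - j + 1)) := by
  have hij' : (i : ℕ) < j := hij
  set m := max (2 * (e + 1)) (n - j - 1)
  refine (ih m (le_max_left _ _) _ _ (bFree_induce_firstMisses hG (le_max_left _ _)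
    (by omega) v hij (by omega))).mono ?_
  rw [chromaticBound_max]
  exact chromaticBound_mono le_rfl (by have := cliqueNum_induce_firstMisses_add_le v hω hij; omega)

theorem colorable_of_bFree_succ [Finite V] {e n : ℕ}
    (ih : ∀ m, 2 * (e + 1) ≤ m → ∀ (U : Type) [Finite U] (H : SimpleGraph U),
      BFree m e H → H.Colorable (chromaticBound e m H.cliqueNum))
    (hn : 2 * (e + 2) ≤ n) (hG : BFree n (e + 1) G) :
    G.Colorable (chromaticBound (e + 1) n G.cliqueNum) := by
  classical
  obtain ⟨s, hs⟩ := G.exists_isNClique_cliqueNum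
  set ω := G.cliqueNum
  let v := topEmbeddingOfNotCliqueFree hs.not_cliqueFree
  let A : Fin ω ⊕ Fin ω × Fin ω → Set V :=
    Sum.elim (G.missesOnly v) fun q => G.firstMisses v q.1 q.2
  let k : Fin ω ⊕ Fin ω × Fin ω → ℕ :=
    Sum.elim 1 fun q => if q.1 < q.2 then chromaticBound e (n - q.2 - 1) (ω - q.2 + 1) else 0
  have hcover (x : V) : ∃ q, x ∈ A q := by
    obtain ⟨i, hi⟩ | ⟨i, j, hij⟩ := exists_mem_missesOnly_or_firstMisses v le_rfl x
    exacts [⟨.inl i, hi⟩, ⟨.inr (i, j), hij⟩]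
  have hclasses : ∀ q, (G.induce (A q)).Colorable (k q) := by
    rintro (i | ⟨i, j⟩)
    · exact (isIndepSet_missesOnly v le_rfl i).colorable_induce
    by_cases hij : i < j
    · simp only [A, k, Sum.elim_inr, if_pos hij]
      exact colorable_induce_firstMisses ih hn hG v le_rfl hij
    · have : IsEmpty (A (.inr (i, j))) := ⟨fun x => hij x.2.1⟩
      exact .of_isEmpty _
  refine (colorable_sum_of_cover A hcover k hclasses).mono ?_
  rw [Fintype.sum_sum_type]
  simp only [k, Sum.elim_inl, Sum.elim_inr, Pi.one_apply, sum_const, card_univ, Fintype.card_fin,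
    smul_eq_mul, mul_one]
  rw [Fin.sum_prod_ite_lt ω fun j => chromaticBound e (n - j - 1) (ω - j + 1)]
  exact add_sum_range_mul_chromaticBound_le e n ω

theorem colorable_chromaticBound_of_bFree (d : ℕ) :
    ∀ n, 2 * (d + 1) ≤ n → ∀ (V : Type) [Finite V] (G : SimpleGraph V),
      BFree n d G → G.Colorable (chromaticBound d n G.cliqueNum) := by
  induction d with
  | zero => exact fun n hn V _ G hG => colorable_of_bFree_zero hn hG
  | succ e ih => exact fun n hn V _ G hG => colorable_of_bFree_succ ih hn hG

end SimpleGraph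

theorem stmt_18 (d n : ℕ) (hn : 2 * (d + 1) ≤ n)
    (V : Type) [Fintype V] (G : SimpleGraph V) (hG : BFree n d G) :
    G.chromaticNumber ≤
      ((Nat.choose (G.cliqueNum - 1 + 2 * d) (2 * d) +
        Nat.choose (n - 2) (2 * d + 1) : ℕ) : ℕ∞) :=
  (colorable_chromaticBound_of_bFree d n hn V G hG).chromaticNumber_le
end
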